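/- For every adjointable operator T on a Hilbert C*-module H, the spatial numerical radius is bounded by the numerical radius: w̃(T) ≤ w(T). -/

import Mathlib

open scoped ComplexOrder RightActions

noncomputable section

/-- The Hilbert C⋆-module class as Mathlib defined it in December 2024 (right `A`-module,
`SMul Aᵐᵒᵖ E`, inner product `A`-linear on the right); Mathlib's `CStarModule` now has another
convention, so the old one is spelled out here. -/
class RightCStarModule (A E : Type*) [NonUnitalSemiring A] [StarRing A]
    [Module ℂ A] [AddCommGroup E] [Module ℂ E] [PartialOrder A] [SMul Aᵐᵒᵖ E] [Norm A] [Norm E]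
    extends Inner A E where
  inner_add_right {x} {y} {z} : inner x (y + z) = inner x y + inner x z
  inner_self_nonneg {x} : 0 ≤ inner x x
  inner_self {x} : inner x x = 0 ↔ x = 0
  inner_op_smul_right {a : A} {x y : E} : inner x (y <• a) = inner x y * a
  inner_smul_right_complex {z : ℂ} {x} {y} : inner x (z • y) = z • inner x y
  star_inner x y : star (inner x y) = inner y x
  norm_eq_sqrt_norm_inner_self x : ‖x‖ = Real.sqrt ‖inner x x‖

variable {A : Type*} [NonUnitalCStarAlgebra A] [PartialOrder A] [StarOrderedRing A]
variable {H : Type*} [NormedAddCommGroup H] [NormedSpace ℂ H] [SMul Aᵐᵒᵖ H] [RightCStarModule A H]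

/-- A state on the C*-algebra `A`: a norm-one functional that is positive. -/
def IsState (ρ : A →L[ℂ] ℂ) : Prop :=
  ‖ρ‖ = 1 ∧ ∀ a : A, 0 ≤ ρ (star a * a)

/-- The spatial numerical radius `w̃(T)`. -/
def spatialNumRadius (A : Type*) {H : Type*} [NonUnitalCStarAlgebra A] [PartialOrder A]
    [StarOrderedRing A] [NormedAddCommGroup H] [NormedSpace ℂ H] [SMul Aᵐᵒᵖ H] [RightCStarModule A H]
    (T : H →L[ℂ] H) : ℝ :=
  sSup {r : ℝ | ∃ (x : H) (ρ : A →L[ℂ] ℂ), IsState ρ ∧ ρ (inner A x x : A) = 1 ∧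
    r = ‖ρ (inner A x (T x) : A)‖}

/-- The numerical radius `w(T)` of a Hilbert C*-module operator. -/
def numRadius (A : Type*) {H : Type*} [NonUnitalCStarAlgebra A] [PartialOrder A]
    [StarOrderedRing A] [NormedAddCommGroup H] [NormedSpace ℂ H] [SMul Aᵐᵒᵖ H] [RightCStarModule A H]
    (T : H →L[ℂ] H) : ℝ :=
  sSup {r : ℝ | ∃ x : H, ‖x‖ = 1 ∧ r = ‖(inner A (T x) x : A)‖}

namespace RightCStarModule

lemma inner_add_left {x y z : H} : inner A (x + y) z = inner A x z + inner A y z := by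
  rw [← star_inner (A := A) z (x + y), inner_add_right, star_add, star_inner, star_inner]

lemma inner_smul_left_complex {z : ℂ} {x y : H} : inner A (z • x) y = star z • inner A x y := by
  rw [← star_inner (A := A) y (z • x), inner_smul_right_complex, star_smul, star_inner]

lemma inner_zero_left {x : H} : inner A (0 : H) x = 0 := by
  have h := inner_add_left (A := A) (x := (0 : H)) (y := 0) (z := x)
  simpa using h

lemma inner_op_smul_left {a : A} {x y : H} : inner A (x <• a) y = star a * inner A x y := by
  rw [← star_inner (A := A) y, inner_op_smul_right, star_mul, star_inner]

lemma inner_neg_right {x y : H} : inner A x (-y) = -inner A x y := by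
  rw [← neg_one_smul ℂ y, inner_smul_right_complex, neg_one_smul]

lemma inner_neg_left {x y : H} : inner A (-x) y = -inner A x y := by
  rw [← neg_one_smul ℂ x, inner_smul_left_complex, star_neg, star_one, neg_one_smul]

lemma inner_sub_right {x y z : H} : inner A x (y - z) = inner A x y - inner A x z := by
  rw [sub_eq_add_neg, inner_add_right, inner_neg_right, ← sub_eq_add_neg]

lemma inner_sub_left {x y z : H} : inner A (x - y) z = inner A x z - inner A y z := by
  rw [sub_eq_add_neg, inner_add_left, inner_neg_left, ← sub_eq_add_neg]

lemma inner_smul_left_real {r : ℝ} {x y : H} : inner A (r • x) y = r • inner A x y := by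
  rw [← Complex.coe_smul, inner_smul_left_complex, Complex.star_def, Complex.conj_ofReal,
    Complex.coe_smul]

lemma inner_smul_right_real {r : ℝ} {x y : H} : inner A x (r • y) = r • inner A x y := by
  rw [← Complex.coe_smul, inner_smul_right_complex, Complex.coe_smul]

lemma norm_sq_eq {x : H} : ‖x‖ ^ 2 = ‖inner A x x‖ := by
  rw [norm_eq_sqrt_norm_inner_self (A := A) x, Real.sq_sqrt (norm_nonneg _)]

lemma norm_inner_le (H : Type*) [NormedAddCommGroup H] [NormedSpace ℂ H] [SMul Aᵐᵒᵖ H]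
    [RightCStarModule A H] {x y : H} : ‖inner A x y‖ ≤ ‖x‖ * ‖y‖ := by
  rcases eq_or_ne x 0 with rfl | hx
  · simp [inner_zero_left]
  have hxpos : 0 < ‖x‖ := norm_pos_iff.mpr hx
  set r : ℝ := ‖x‖ ^ 2 with hrdef
  have hr : 0 < r := by positivity
  set a : A := inner A x y with ha
  have hb : inner A y x = star a := (star_inner x y).symm
  have hX : ‖inner A x x‖ = r := norm_sq_eq.symm
  have h0 : (0 : A) ≤ inner A (x <• a - r • y) (x <• a - r • y) := inner_self_nonneg
  have hexp : inner A (x <• a - r • y) (x <• a - r • y)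
      = star a * inner A x x * a - r • (star a * a) - r • (star a * a)
        + r • (r • inner A y y) := by
    simp only [inner_sub_left, inner_sub_right, inner_op_smul_left, inner_op_smul_right,
      inner_smul_left_real, inner_smul_right_real, hb, ← ha, mul_assoc, mul_sub, sub_mul,
      smul_sub, smul_mul_assoc, mul_smul_comm]
    abel
  have hle : star a * inner A x x * a ≤ r • (star a * a) := by
    have := CStarAlgebra.star_left_conjugate_le_norm_smul (a := a) (b := inner A x x)
      (star_inner x x)
    rwa [hX] at this
  have h1 : (0 : A) ≤ r • (star a * a) - r • (star a * a) - r • (star a * a)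
      + r • (r • inner A y y) := by
    calc (0 : A) ≤ _ := h0
      _ = _ := hexp
      _ ≤ _ := by gcongr
  have h2 : r • (star a * a) - r • (star a * a) - r • (star a * a) + r • (r • inner A y y)
      = r • (r • inner A y y) - r • (star a * a) := by abel
  rw [h2, sub_nonneg, smul_le_smul_iff_of_pos_left hr] at h1
  have h3 : ‖a‖ ^ 2 ≤ (‖x‖ * ‖y‖) ^ 2 := by
    calc ‖a‖ ^ 2 = ‖star a * a‖ := by rw [CStarRing.norm_star_mul_self, pow_two]
      _ ≤ ‖r • inner A y y‖ :=
          CStarAlgebra.norm_le_norm_of_nonneg_of_le (star_mul_self_nonneg a) h1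
      _ = r * ‖inner A y y‖ := by rw [norm_smul, Real.norm_eq_abs, abs_of_pos hr]
      _ = (‖x‖ * ‖y‖) ^ 2 := by rw [← norm_sq_eq, hrdef, mul_pow]
  exact (pow_le_pow_iff_left₀ (norm_nonneg a) (by positivity) (by norm_num)).mp h3

end RightCStarModule

/-! ### Auxiliary general lemmas (no C*-module involved) -/

/-- Extension of a continuous linear map to the completion. -/
lemma exists_completion_extension {E : Type*} [NormedAddCommGroup E] [NormedSpace ℂ E]
    (S : E →L[ℂ] E) :
    ∃ Sc : UniformSpace.Completion E →L[ℂ] UniformSpace.Completion E,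
      ∀ x : E, Sc ((x : UniformSpace.Completion E)) = ((S x : E) : UniformSpace.Completion E) := by
  have hcoe : ⇑(UniformSpace.Completion.toComplL : E →L[ℂ] UniformSpace.Completion E)
      = ((↑) : E → UniformSpace.Completion E) := UniformSpace.Completion.coe_toComplL
  have hdense : DenseRange ⇑(UniformSpace.Completion.toComplL : E →L[ℂ] _) := by
    rw [hcoe]; exact UniformSpace.Completion.denseRange_coe
  have hind : IsUniformInducing ⇑(UniformSpace.Completion.toComplL : E →L[ℂ] _) := by
    rw [hcoe]; exact UniformSpace.Completion.isUniformInducing_coe E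
  refine ⟨(UniformSpace.Completion.toComplL.comp S).extend
    UniformSpace.Completion.toComplL, fun x => ?_⟩
  have h := ContinuousLinearMap.extend_eq (UniformSpace.Completion.toComplL.comp S)
    hdense hind x
  simpa only [ContinuousLinearMap.comp_apply, hcoe] using h

/-- Gelfand-type norm formula from norm-doubling. -/
lemma spectralRadius_eq_nnnorm_of_pow {B : Type*} [NormedRing B] [NormedAlgebra ℂ B]
    [CompleteSpace B] (b : B) (hb : ∀ n : ℕ, ‖b ^ (2 ^ n)‖ = ‖b‖ ^ (2 ^ n)) :
    spectralRadius ℂ b = (‖b‖₊ : ENNReal) := by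
  have hconst : Filter.Tendsto (fun _ : ℕ => (‖b‖₊ : ENNReal)) Filter.atTop
      (nhds ((‖b‖₊ : ENNReal))) := tendsto_const_nhds
  refine tendsto_nhds_unique ?_ hconst
  convert (spectrum.pow_nnnorm_pow_one_div_tendsto_nhds_spectralRadius b).comp
    (tendsto_pow_atTop_atTop_of_one_lt (α := ℕ) (one_lt_two)) using 1
  funext n
  rw [Function.comp_apply]
  have h1 : ‖b ^ (2 ^ n)‖₊ = ‖b‖₊ ^ (2 ^ n) :=
    NNReal.coe_injective (by simpa [NNReal.coe_pow] using hb n)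
  rw [h1, ENNReal.coe_pow, ← ENNReal.rpow_natCast, ← ENNReal.rpow_mul]
  have h2 : ((2 ^ n : ℕ) : ℝ) * (1 / ((2 ^ n : ℕ) : ℝ)) = 1 := by
    have : ((2 ^ n : ℕ) : ℝ) ≠ 0 := by positivity
    field_simp
  rw [h2, ENNReal.rpow_one]

/-- In a nontrivial complex Banach space, an operator whose spectral radius equals its norm
has approximate eigenvectors of modulus `‖B‖`. -/
lemma exists_approx_eigenvector {F : Type*} [NormedAddCommGroup F] [NormedSpace ℂ F]
    [CompleteSpace F] [Nontrivial F] (B : F →L[ℂ] F)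
    (hr : spectralRadius ℂ B = (‖B‖₊ : ENNReal)) (hB0 : 0 < ‖B‖) :
    ∃ lam : ℂ, ‖lam‖ = ‖B‖ ∧
      ∀ δ : ℝ, 0 < δ → ∃ v : F, ‖v‖ = 1 ∧ ‖B v - lam • v‖ < δ := by
  haveI : Nontrivial (F →L[ℂ] F) := by
    obtain ⟨v, hv⟩ := exists_ne (0 : F)
    refine ⟨1, 0, fun h => hv ?_⟩
    have := congrArg (fun f : F →L[ℂ] F => f v) h
    simpa using this
  obtain ⟨lam, hmem, hlam⟩ := spectrum.exists_nnnorm_eq_spectralRadius B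
  have hlamnorm : ‖lam‖ = ‖B‖ := by
    rw [hr] at hlam
    exact congrArg NNReal.toReal (ENNReal.coe_injective hlam)
  refine ⟨lam, hlamnorm, fun δ hδ => ?_⟩
  by_contra hcc
  push_neg at hcc
  have hlow : ∀ v : F, δ * ‖v‖ ≤ ‖B v - lam • v‖ := by
    intro v
    rcases eq_or_ne v 0 with rfl | hv
    · simp
    · have hnv : 0 < ‖v‖ := norm_pos_iff.mpr hv
      have h1 : ‖((((‖v‖⁻¹ : ℝ) : ℂ)) • v : F)‖ = 1 := by
        rw [norm_smul, Complex.norm_real, norm_inv, norm_norm]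
        field_simp
      have h2 := hcc _ h1
      have h3 : B ((((‖v‖⁻¹ : ℝ) : ℂ)) • v) - lam • ((((‖v‖⁻¹ : ℝ) : ℂ)) • v)
          = (((‖v‖⁻¹ : ℝ) : ℂ)) • (B v - lam • v) := by
        rw [map_smul, smul_sub, smul_comm lam]
      rw [h3, norm_smul, Complex.norm_real, norm_inv, norm_norm] at h2
      calc δ * ‖v‖ ≤ (‖v‖⁻¹ * ‖B v - lam • v‖) * ‖v‖ :=
            mul_le_mul_of_nonneg_right h2 (norm_nonneg v)
        _ = ‖B v - lam • v‖ := by field_simp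
  set t : ℝ := δ / (2 * (‖B‖ + 1)) with ht
  have ht0 : 0 < t := by rw [ht]; positivity
  have htlt : t * ‖lam‖ < δ / 2 := by
    rw [hlamnorm, ht, div_mul_eq_mul_div, div_lt_div_iff₀ (by positivity) (by norm_num)]
    nlinarith
  set z : ℂ := (1 + (t : ℂ)) * lam with hzdef
  have hzmem : z ∉ spectrum ℂ B := by
    intro hmz
    have h1 : (‖z‖₊ : ENNReal) ≤ spectralRadius ℂ B :=
      le_iSup₂ (f := fun k (_ : k ∈ spectrum ℂ B) => (‖k‖₊ : ENNReal)) z hmz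
    have h1' : (‖z‖₊ : ENNReal) ≤ (‖B‖₊ : ENNReal) := le_of_le_of_eq h1 hr
    have h2 : ‖z‖ ≤ ‖B‖ := ENNReal.coe_le_coe.mp h1'
    have h3 : ‖z‖ = (1 + t) * ‖lam‖ := by
      rw [hzdef, norm_mul]
      congr 1
      have h4 : (1 + (t : ℂ)) = ((1 + t : ℝ) : ℂ) := by push_cast; ring
      rw [h4, Complex.norm_real]
      exact abs_of_pos (by linarith)
    have h6 : (1 + t) * ‖lam‖ ≤ ‖B‖ := le_of_eq_of_le h3.symm h2
    nlinarith [h6, hlamnorm, ht0, hB0]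
  have hunit : IsUnit (algebraMap ℂ (F →L[ℂ] F) z - B) := spectrum.notMem_iff.mp hzmem
  obtain ⟨V, hBV1⟩ : ∃ V : F →L[ℂ] F, (algebraMap ℂ (F →L[ℂ] F) z - B) * V = 1 := by
    exact ⟨((hunit.unit⁻¹ : _ˣ) : F →L[ℂ] F), hunit.mul_val_inv⟩
  have hbV : ∀ w : F, (algebraMap ℂ (F →L[ℂ] F) z - B) (V w) = w := by
    intro w
    calc (algebraMap ℂ (F →L[ℂ] F) z - B) (V w)
        = ((algebraMap ℂ (F →L[ℂ] F) z - B) * V) w := (ContinuousLinearMap.mul_apply _ _ _).symm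
      _ = w := by rw [hBV1]; rfl
  have hblow : ∀ w : F, (δ / 2) * ‖w‖ ≤ ‖(algebraMap ℂ (F →L[ℂ] F) z - B) w‖ := by
    intro w
    have h1 : (algebraMap ℂ (F →L[ℂ] F) z - B) w = (lam • w - B w) + ((t : ℂ) * lam) • w := by
      rw [ContinuousLinearMap.sub_apply, Algebra.algebraMap_eq_smul_one,
        ContinuousLinearMap.smul_apply, ContinuousLinearMap.one_apply, hzdef]
      rw [show ((1 + (t : ℂ)) * lam) • w = lam • w + ((t : ℂ) * lam) • w by
        rw [← add_smul]; ring_nf]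
      abel
    have h2 : δ * ‖w‖ ≤ ‖lam • w - B w‖ := by
      rw [norm_sub_rev]; exact hlow w
    have h3 : ‖((t : ℂ) * lam) • w‖ ≤ (δ / 2) * ‖w‖ := by
      rw [norm_smul, norm_mul, Complex.norm_real, Real.norm_eq_abs, abs_of_pos ht0]
      exact mul_le_mul_of_nonneg_right htlt.le (norm_nonneg w)
    have h4 := norm_add_le ((lam • w - B w) + ((t : ℂ) * lam) • w) (-(((t : ℂ) * lam) • w))
    simp only [add_neg_cancel_right, norm_neg] at h4
    rw [h1]
    linarith
  have hVnorm : ‖V‖ ≤ 2 / δ := by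
    refine V.opNorm_le_bound (by positivity) fun w => ?_
    have h1 := hblow (V w)
    rw [hbV w] at h1
    rw [div_mul_eq_mul_div, div_le_iff₀ (by norm_num : (0:ℝ) < 2)] at h1
    rw [div_mul_eq_mul_div, le_div_iff₀ hδ]
    linarith
  have hsmall : ‖((t : ℂ) * lam) • V‖ < 1 := by
    refine lt_of_le_of_lt (ContinuousLinearMap.opNorm_smul_le ((t : ℂ) * lam) V) ?_
    rw [norm_mul, Complex.norm_real, Real.norm_eq_abs, abs_of_pos ht0]
    calc t * ‖lam‖ * ‖V‖ ≤ t * ‖lam‖ * (2 / δ) := by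
          apply mul_le_mul_of_nonneg_left hVnorm
          positivity
      _ < (δ / 2) * (2 / δ) := by
          apply mul_lt_mul_of_pos_right htlt
          positivity
      _ = 1 := by field_simp
  have hlamunit : IsUnit (algebraMap ℂ (F →L[ℂ] F) lam - B) := by
    refine ⟨hunit.unit * Units.oneSub (((t : ℂ) * lam) • V) hsmall, ?_⟩
    rw [Units.val_mul, hunit.unit_spec, Units.val_oneSub]
    calc (algebraMap ℂ (F →L[ℂ] F) z - B) * (1 - ((t : ℂ) * lam) • V)
        = (algebraMap ℂ (F →L[ℂ] F) z - B)
            - ((t : ℂ) * lam) • ((algebraMap ℂ (F →L[ℂ] F) z - B) * V) := by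
          rw [mul_sub, mul_one, mul_smul_comm]
      _ = (algebraMap ℂ (F →L[ℂ] F) z - B) - ((t : ℂ) * lam) • (1 : F →L[ℂ] F) := by rw [hBV1]
      _ = algebraMap ℂ (F →L[ℂ] F) lam - B := by
          have hz2 : z - (t : ℂ) * lam = lam := by rw [hzdef]; ring
          rw [Algebra.algebraMap_eq_smul_one, Algebra.algebraMap_eq_smul_one, sub_right_comm,
            ← sub_smul, hz2]
  exact (spectrum.mem_iff.mp hmem) hlamunit

/-- elementary: controlling via `2 ^ n`-th powers. -/
lemma le_of_pow_two_pow_le {r s C : ℝ} (hs : 0 ≤ s) (hC : 0 < C)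
    (h : ∀ n : ℕ, r ^ (2 ^ n) ≤ C * s ^ (2 ^ n)) : r ≤ s := by
  by_contra hc
  push_neg at hc
  have hr0 : 0 < r := lt_of_le_of_lt hs hc
  rcases hs.eq_or_lt with hs0 | hs0
  · have h0 := h 0
    norm_num [← hs0] at h0
    linarith
  · set q : ℝ := r / s with hq
    have hq1 : 1 < q := (one_lt_div hs0).mpr hc
    obtain ⟨n, hn⟩ := pow_unbounded_of_one_lt C hq1
    have h2 : q ^ n ≤ q ^ (2 ^ n) := pow_le_pow_right₀ hq1.le (Nat.lt_two_pow_self).le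
    have h3 : r ^ (2 ^ n) = q ^ (2 ^ n) * s ^ (2 ^ n) := by
      rw [hq, div_pow, div_mul_cancel₀]
      exact (pow_pos hs0 _).ne'
    have h4 := h n
    have h5 : C * s ^ (2 ^ n) < q ^ n * s ^ (2 ^ n) :=
      mul_lt_mul_of_pos_right hn (by positivity)
    have h6 : q ^ n * s ^ (2 ^ n) ≤ q ^ (2 ^ n) * s ^ (2 ^ n) :=
      mul_le_mul_of_nonneg_right h2 (by positivity)
    rw [h3] at h4
    linarith

section Aux

local notation "⟪" x ", " y "⟫" => (inner A x y : A)

/-- A state is nonnegative on nonnegative elements. -/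
lemma IsState.map_nonneg {ρ : A →L[ℂ] ℂ} (hρ : IsState ρ) {a : A} (ha : 0 ≤ a) : 0 ≤ ρ a := by
  rw [StarOrderedRing.nonneg_iff] at ha
  refine AddSubmonoid.closure_induction ?_ ?_ ?_ ha
  · rintro x ⟨s, rfl⟩
    exact hρ.2 s
  · simp
  · intro x y _ _ hx hy
    rw [map_add]
    exact add_nonneg hx hy

lemma IsState.im_eq_zero {ρ : A →L[ℂ] ℂ} (hρ : IsState ρ) {a : A} (ha : IsSelfAdjoint a) :
    (ρ a).im = 0 := by
  have h1 := hρ.map_nonneg (CFC.posPart_nonneg a)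
  have h2 := hρ.map_nonneg (CFC.negPart_nonneg a)
  rw [Complex.nonneg_iff] at h1 h2
  have h3 : a = a⁺ - a⁻ := (CFC.posPart_sub_negPart a ha).symm
  rw [h3, map_sub, Complex.sub_im, ← h1.2, ← h2.2, sub_zero]

/-- A state is hermitian. -/
lemma IsState.map_star {ρ : A →L[ℂ] ℂ} (hρ : IsState ρ) (a : A) :
    ρ (star a) = starRingEnd ℂ (ρ a) := by
  have h1 : (ρ (star a) + ρ a).im = 0 := by
    rw [← map_add]
    exact hρ.im_eq_zero (by simp [IsSelfAdjoint, star_add, add_comm])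
  have h2 : (Complex.I * (ρ (star a) - ρ a)).im = 0 := by
    rw [← map_sub, ← smul_eq_mul, ← map_smul]
    refine hρ.im_eq_zero ?_
    simp only [IsSelfAdjoint, star_smul, star_sub, star_star, Complex.star_def,
      Complex.conj_I, neg_smul, ← smul_neg, neg_sub]
  apply Complex.ext
  · have h2' : (ρ (star a)).re - (ρ a).re = 0 := by
      simpa [Complex.mul_im, Complex.sub_re, Complex.sub_im] using h2
    simp only [Complex.conj_re]
    linarith
  · have h1' : (ρ (star a)).im + (ρ a).im = 0 := by
      simpa [Complex.add_im] using h1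
    simp only [Complex.conj_im]
    linarith

/-- Cauchy–Schwarz for the scalar form induced by a state. -/
lemma IsState.cauchySchwarz {ρ : A →L[ℂ] ℂ} (hρ : IsState ρ) (y z : H) :
    ‖ρ ⟪y, z⟫‖ ^ 2 ≤ (ρ ⟪y, y⟫).re * (ρ ⟪z, z⟫).re := by
  set m : ℂ := ρ ⟪y, z⟫ with hm
  set p : ℝ := (ρ ⟪y, y⟫).re with hp
  set q : ℝ := (ρ ⟪z, z⟫).re with hq
  have hyy0 := hρ.map_nonneg (RightCStarModule.inner_self_nonneg (x := y))
  have hzz0 := hρ.map_nonneg (RightCStarModule.inner_self_nonneg (x := z))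
  rw [Complex.nonneg_iff] at hyy0 hzz0
  have hyy : ρ ⟪y, y⟫ = (p : ℂ) := Complex.ext rfl hyy0.2.symm
  have hzz : ρ ⟪z, z⟫ = (q : ℂ) := Complex.ext rfl hzz0.2.symm
  have hp0 : 0 ≤ p := hyy0.1
  have hq0 : 0 ≤ q := hzz0.1
  have hzy : ρ ⟪z, y⟫ = starRingEnd ℂ m := by
    rw [← RightCStarModule.star_inner, hρ.map_star, hm]
  set M : ℝ := ‖m‖ ^ 2 with hM
  have hM0 : 0 ≤ M := by positivity
  have key : ∀ t : ℝ, 0 ≤ p - 2 * t * M + t ^ 2 * M * q := by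
    intro t
    set c : ℂ := -(t : ℂ) * starRingEnd ℂ m with hc
    have h0 : (0:ℂ) ≤ ρ ⟪y + c • z, y + c • z⟫ :=
      hρ.map_nonneg RightCStarModule.inner_self_nonneg
    have hexp : ⟪y + c • z, y + c • z⟫
        = ⟪y, y⟫ + (starRingEnd ℂ c) • ⟪z, y⟫ + c • ⟪y, z⟫
          + ((starRingEnd ℂ c) * c) • ⟪z, z⟫ := by
      rw [RightCStarModule.inner_add_right, RightCStarModule.inner_add_left, RightCStarModule.inner_add_left,
        RightCStarModule.inner_smul_right_complex, RightCStarModule.inner_smul_left_complex,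
        RightCStarModule.inner_smul_left_complex, RightCStarModule.inner_smul_right_complex, smul_smul,
        Complex.star_def]
      abel
    have h1 : c * m = ((-(t * M) : ℝ) : ℂ) := by
      rw [hc, mul_assoc, mul_comm (starRingEnd ℂ m) m, Complex.mul_conj, Complex.normSq_eq_norm_sq,
        hM]
      push_cast
      ring
    have h2 : (starRingEnd ℂ c) * (starRingEnd ℂ m) = ((-(t * M) : ℝ) : ℂ) := by
      rw [← map_mul, h1, Complex.conj_ofReal]
    have h3 : (starRingEnd ℂ c) * c = ((t ^ 2 * M : ℝ) : ℂ) := by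
      rw [mul_comm, Complex.mul_conj, Complex.normSq_eq_norm_sq, hc]
      have h3' : ‖-(t : ℂ) * starRingEnd ℂ m‖ = |t| * ‖m‖ := by
        rw [norm_mul, norm_neg, Complex.norm_real, Real.norm_eq_abs, Complex.norm_conj]
      rw [h3']
      push_cast [mul_pow, sq_abs, hM]
      ring
    have hval : ρ ⟪y + c • z, y + c • z⟫ = ((p - 2 * t * M + t ^ 2 * M * q : ℝ) : ℂ) := by
      rw [hexp, map_add, map_add, map_add, map_smul, map_smul, map_smul, hyy, hzz, hzy, ← hm]
      simp only [smul_eq_mul]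
      rw [h2, h3, h1]
      push_cast
      ring
    rw [hval] at h0
    exact Complex.zero_le_real.mp h0
  show M ≤ p * q
  rcases hq0.eq_or_lt with hqe | hqpos
  · by_contra hlt
    push_neg at hlt
    have hMpos : 0 < M := by nlinarith
    have hk := key ((p + 1) / (2 * M))
    rw [← hqe] at hk
    have hsimp : 2 * ((p + 1) / (2 * M)) * M = p + 1 := by
      field_simp
    nlinarith
  · have hk := key (1 / q)
    have he : p - 2 * (1 / q) * M + (1 / q) ^ 2 * M * q = p - M / q := by
      field_simp
      ring
    rw [he] at hk
    have hle : M / q ≤ p := by linarith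
    calc M = (M / q) * q := by field_simp
      _ ≤ p * q := mul_le_mul_of_nonneg_right hle hq0

section Symmetric

variable (S : H →L[ℂ] H)

/-- powers of a symmetric operator are symmetric. -/
lemma sym_pow (hS : ∀ y z : H, ⟪S y, z⟫ = ⟪y, S z⟫) :
    ∀ (k : ℕ) (y z : H), ⟪(S ^ k) y, z⟫ = ⟪y, (S ^ k) z⟫ := by
  intro k
  induction k with
  | zero => intro y z; simp
  | succ n ih =>
    intro y z
    rw [pow_succ, ContinuousLinearMap.mul_apply, ih (S y) z, hS y ((S ^ n) z),
      show S ^ n * S = S * S ^ n by rw [← pow_succ, pow_succ'],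
      ContinuousLinearMap.mul_apply]

lemma sq_opNorm_le (hS : ∀ y z : H, ⟪S y, z⟫ = ⟪y, S z⟫) : ‖S‖ ^ 2 ≤ ‖S * S‖ := by
  have hb : ∀ x : H, ‖S x‖ ≤ Real.sqrt ‖S * S‖ * ‖x‖ := by
    intro x
    have h1 : ‖S x‖ ^ 2 = ‖⟪S x, S x⟫‖ := RightCStarModule.norm_sq_eq
    rw [hS x (S x)] at h1
    have h2 : ‖⟪x, S (S x)⟫‖ ≤ ‖x‖ * ‖(S * S) x‖ := by
      rw [ContinuousLinearMap.mul_apply]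
      exact RightCStarModule.norm_inner_le H
    have h3 : ‖S x‖ ^ 2 ≤ ‖S * S‖ * ‖x‖ ^ 2 := by
      calc ‖S x‖ ^ 2 = ‖⟪x, S (S x)⟫‖ := h1
        _ ≤ ‖x‖ * ‖(S * S) x‖ := h2
        _ ≤ ‖x‖ * (‖S * S‖ * ‖x‖) :=
            mul_le_mul_of_nonneg_left ((S * S).le_opNorm x) (norm_nonneg x)
        _ = ‖S * S‖ * ‖x‖ ^ 2 := by ring
    have h4 := Real.sqrt_le_sqrt h3
    rwa [Real.sqrt_sq (norm_nonneg _), Real.sqrt_mul (norm_nonneg _), Real.sqrt_sq (norm_nonneg _)]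
      at h4
  have h4 : ‖S‖ ≤ Real.sqrt ‖S * S‖ := S.opNorm_le_bound (Real.sqrt_nonneg _) hb
  calc ‖S‖ ^ 2 ≤ Real.sqrt ‖S * S‖ ^ 2 := by
        apply pow_le_pow_left₀ (norm_nonneg S) h4
    _ = ‖S * S‖ := Real.sq_sqrt (norm_nonneg _)

lemma norm_pow_two_pow (hS : ∀ y z : H, ⟪S y, z⟫ = ⟪y, S z⟫) :
    ∀ n : ℕ, ‖S ^ (2 ^ n)‖ = ‖S‖ ^ (2 ^ n) := by
  intro n
  induction n with
  | zero => simp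
  | succ n ih =>
    have hsym' := sym_pow S hS (2 ^ n)
    have h1 : ‖S ^ (2 ^ n) * S ^ (2 ^ n)‖ = ‖S ^ (2 ^ n)‖ ^ 2 :=
      le_antisymm (by rw [sq]; exact norm_mul_le _ _) (sq_opNorm_le (S ^ (2 ^ n)) hsym')
    have h2 : S ^ (2 ^ (n + 1)) = S ^ (2 ^ n) * S ^ (2 ^ n) := by
      rw [← pow_add]
      congr 1
      rw [pow_succ, Nat.mul_two]
    rw [h2, h1, ih, ← pow_mul, ← pow_succ]

/-- The key spectral fact: for a symmetric operator, the operator norm is controlled by the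
numerical radius. -/
lemma opNorm_le_of_inner_bound (hS : ∀ y z : H, ⟪S y, z⟫ = ⟪y, S z⟫)
    {M : ℝ} (hM0 : 0 ≤ M) (hM : ∀ u : H, ‖u‖ = 1 → ‖⟪S u, u⟫‖ ≤ M) : ‖S‖ ≤ M := by
  by_contra hcon
  push_neg at hcon
  have hS0 : 0 < ‖S‖ := lt_of_le_of_lt hM0 hcon
  obtain ⟨Sc, hSc⟩ := exists_completion_extension S
  have hScpow : ∀ (k : ℕ) (x : H),
      (Sc ^ k) ((x : UniformSpace.Completion H)) = (((S ^ k) x : H) : UniformSpace.Completion H) := by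
    intro k
    induction k with
    | zero => intro x; simp
    | succ n ih =>
      intro x
      rw [pow_succ, ContinuousLinearMap.mul_apply, hSc, ih (S x), pow_succ,
        ContinuousLinearMap.mul_apply]
  have hnormpow : ∀ k : ℕ, ‖Sc ^ k‖ = ‖S ^ k‖ := by
    intro k
    refine le_antisymm ?_ ?_
    · refine ContinuousLinearMap.opNorm_le_bound _ (norm_nonneg _) fun v => ?_
      refine UniformSpace.Completion.induction_on v ?_ ?_
      · exact isClosed_le ((Sc ^ k).continuous.norm)
          (continuous_const.mul continuous_norm)
      · intro x
        rw [hScpow k x, UniformSpace.Completion.norm_coe, UniformSpace.Completion.norm_coe]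
        exact (S ^ k).le_opNorm x
    · refine ContinuousLinearMap.opNorm_le_bound _ (norm_nonneg _) fun x => ?_
      calc ‖(S ^ k) x‖ = ‖(((S ^ k) x : H) : UniformSpace.Completion H)‖ :=
            (UniformSpace.Completion.norm_coe _).symm
        _ = ‖(Sc ^ k) ((x : UniformSpace.Completion H))‖ := by rw [hScpow]
        _ ≤ ‖Sc ^ k‖ * ‖((x : UniformSpace.Completion H))‖ := (Sc ^ k).le_opNorm _
        _ = ‖Sc ^ k‖ * ‖x‖ := by rw [UniformSpace.Completion.norm_coe]
  have hScnorm : ‖Sc‖ = ‖S‖ := by simpa using hnormpow 1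
  have hxex : ∃ x : H, x ≠ 0 := by
    by_contra hall
    push_neg at hall
    have hz : S = 0 := by
      ext w
      rw [hall (S w)]
      rfl
    rw [hz, norm_zero] at hS0
    exact lt_irrefl _ hS0
  obtain ⟨x0, hx0⟩ := hxex
  haveI : Nontrivial (UniformSpace.Completion H) := by
    refine ⟨(x0 : UniformSpace.Completion H), 0, fun hcontra => hx0 ?_⟩
    have h5 := UniformSpace.Completion.norm_coe (E := H) x0
    rw [hcontra, norm_zero] at h5
    exact norm_eq_zero.mp h5.symm
  have hrad : spectralRadius ℂ Sc = (‖Sc‖₊ : ENNReal) := by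
    refine spectralRadius_eq_nnnorm_of_pow Sc fun n => ?_
    rw [hnormpow, norm_pow_two_pow S hS n, hScnorm]
  have hSc0 : 0 < ‖Sc‖ := by rw [hScnorm]; exact hS0
  obtain ⟨lam, hlamnorm', happrox⟩ := exists_approx_eigenvector Sc hrad hSc0
  have hlamnorm : ‖lam‖ = ‖S‖ := by rw [hlamnorm', hScnorm]
  set ε : ℝ := ‖S‖ - M with hε
  have hε0 : 0 < ε := sub_pos.mpr hcon
  obtain ⟨v, hv1, hv2⟩ := happrox (ε / 8) (by positivity)
  set η : ℝ := min 2⁻¹ (ε / (8 * (‖S‖ + ‖lam‖ + 1))) with hη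
  have hη0 : 0 < η := lt_min (by norm_num) (by positivity)
  obtain ⟨x, hx⟩ : ∃ x : H, ‖((x : UniformSpace.Completion H)) - v‖ < η := by
    obtain ⟨y, hy⟩ := Metric.denseRange_iff.mp (UniformSpace.Completion.denseRange_coe (α := H))
      v η hη0
    exact ⟨y, by rwa [dist_comm, dist_eq_norm] at hy⟩
  have hxnorm : 1 / 2 ≤ ‖x‖ := by
    have h2 := norm_sub_norm_le v ((x : UniformSpace.Completion H))
    rw [norm_sub_rev] at h2
    have h3 : η ≤ 2⁻¹ := min_le_left _ _
    have h4 := UniformSpace.Completion.norm_coe (E := H) x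
    rw [hv1] at h2
    have h5 : ‖((x : UniformSpace.Completion H)) - v‖ < 2⁻¹ := lt_of_lt_of_le hx h3
    rw [← h4]
    linarith
  have hx0 : x ≠ 0 := by
    intro hzz
    rw [hzz, norm_zero] at hxnorm
    linarith
  have hηε : (‖S‖ + ‖lam‖) * η ≤ ε / 8 := by
    have h1 : η ≤ ε / (8 * (‖S‖ + ‖lam‖ + 1)) := min_le_right _ _
    have h2 : (0:ℝ) ≤ ‖S‖ + ‖lam‖ := by positivity
    calc (‖S‖ + ‖lam‖) * η ≤ (‖S‖ + ‖lam‖) * (ε / (8 * (‖S‖ + ‖lam‖ + 1))) :=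
          mul_le_mul_of_nonneg_left h1 h2
      _ ≤ ε / 8 := by
          have h4 : (‖S‖ + ‖lam‖) * (ε / (8 * (‖S‖ + ‖lam‖ + 1)))
              = ε * ((‖S‖ + ‖lam‖) / (8 * (‖S‖ + ‖lam‖ + 1))) := by ring
          have h5 : (‖S‖ + ‖lam‖) / (8 * (‖S‖ + ‖lam‖ + 1)) ≤ 1 / 8 := by
            rw [div_le_div_iff₀ (by positivity) (by norm_num)]
            nlinarith
          rw [h4]
          calc ε * ((‖S‖ + ‖lam‖) / (8 * (‖S‖ + ‖lam‖ + 1))) ≤ ε * (1 / 8) :=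
                mul_le_mul_of_nonneg_left h5 hε0.le
            _ = ε / 8 := by ring
  have hEx : ‖S x - lam • x‖ ≤ ε / 4 := by
    have hh : ((S x - lam • x : H) : UniformSpace.Completion H)
        = Sc ((x : UniformSpace.Completion H)) - lam • ((x : UniformSpace.Completion H)) := by
      push_cast
      rw [hSc]
    have h0 : ‖S x - lam • x‖
        = ‖Sc ((x : UniformSpace.Completion H)) - lam • ((x : UniformSpace.Completion H))‖ := by
      rw [← hh, UniformSpace.Completion.norm_coe]
    have hdec : Sc ((x : UniformSpace.Completion H)) - lam • ((x : UniformSpace.Completion H))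
        = Sc (((x : UniformSpace.Completion H)) - v) + (Sc v - lam • v)
          + lam • (v - ((x : UniformSpace.Completion H))) := by
      rw [map_sub, smul_sub]
      abel
    have h1 : ‖Sc (((x : UniformSpace.Completion H)) - v)‖ ≤ ‖S‖ * η := by
      calc ‖Sc (((x : UniformSpace.Completion H)) - v)‖
          ≤ ‖Sc‖ * ‖((x : UniformSpace.Completion H)) - v‖ := Sc.le_opNorm _
        _ ≤ ‖S‖ * η := by
            rw [hScnorm]
            exact mul_le_mul_of_nonneg_left hx.le (norm_nonneg S)
    have h2 : ‖lam • (v - ((x : UniformSpace.Completion H)))‖ ≤ ‖lam‖ * η := by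
      rw [norm_smul, norm_sub_rev]
      exact mul_le_mul_of_nonneg_left hx.le (norm_nonneg lam)
    rw [h0, hdec]
    calc ‖Sc (((x : UniformSpace.Completion H)) - v) + (Sc v - lam • v)
          + lam • (v - ((x : UniformSpace.Completion H)))‖
        ≤ ‖Sc (((x : UniformSpace.Completion H)) - v)‖ + ‖Sc v - lam • v‖
          + ‖lam • (v - ((x : UniformSpace.Completion H)))‖ := norm_add₃_le
      _ ≤ ‖S‖ * η + ε / 8 + ‖lam‖ * η := add_le_add (add_le_add h1 hv2.le) h2
      _ = (‖S‖ + ‖lam‖) * η + ε / 8 := by ring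
      _ ≤ ε / 8 + ε / 8 := by linarith
      _ = ε / 4 := by ring
  have hun : ‖(((‖x‖⁻¹ : ℝ) : ℂ) • x : H)‖ = 1 := by
    rw [norm_smul, Complex.norm_real, norm_inv, norm_norm]
    field_simp
  have hSu : ‖S ((((‖x‖⁻¹ : ℝ) : ℂ)) • x) - lam • ((((‖x‖⁻¹ : ℝ) : ℂ)) • x)‖ ≤ ε / 2 := by
    have h3 : S ((((‖x‖⁻¹ : ℝ) : ℂ)) • x) - lam • ((((‖x‖⁻¹ : ℝ) : ℂ)) • x)
        = (((‖x‖⁻¹ : ℝ) : ℂ)) • (S x - lam • x) := by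
      rw [map_smul, smul_sub, smul_comm lam]
    rw [h3, norm_smul, Complex.norm_real, norm_inv, norm_norm]
    have hinv : ‖x‖⁻¹ ≤ 2 := by
      rw [inv_le_comm₀ (by linarith) (by norm_num)]
      linarith
    calc ‖x‖⁻¹ * ‖S x - lam • x‖ ≤ 2 * (ε / 4) :=
          mul_le_mul hinv hEx (norm_nonneg _) (by norm_num)
      _ = ε / 2 := by ring
  set u : H := (((‖x‖⁻¹ : ℝ) : ℂ)) • x with hu
  have hfin := hM u hun
  have hlow2 : ‖lam‖ - ‖S u - lam • u‖ ≤ ‖⟪S u, u⟫‖ := by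
    have h1 : ⟪S u, u⟫ = ⟪S u - lam • u, u⟫ + ⟪lam • u, u⟫ := by
      rw [← RightCStarModule.inner_add_left, sub_add_cancel]
    have h2 : ‖⟪lam • u, u⟫‖ = ‖lam‖ := by
      rw [RightCStarModule.inner_smul_left_complex, norm_smul, norm_star]
      have h3 : ‖⟪u, u⟫‖ = 1 := by
        rw [← RightCStarModule.norm_sq_eq, hun, one_pow]
      rw [h3, mul_one]
    have h3 : ‖⟪S u - lam • u, u⟫‖ ≤ ‖S u - lam • u‖ := by
      have h4 := RightCStarModule.norm_inner_le (A := A) H (x := S u - lam • u) (y := u)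
      rwa [hun, mul_one] at h4
    have h5 : ‖⟪lam • u, u⟫‖ ≤ ‖⟪S u, u⟫‖ + ‖⟪S u - lam • u, u⟫‖ := by
      have h6 : ⟪lam • u, u⟫ = ⟪S u, u⟫ - ⟪S u - lam • u, u⟫ := by
        rw [h1]; abel
      rw [h6]
      exact norm_sub_le _ _
    rw [h2] at h5
    linarith
  rw [hlamnorm] at hlow2
  have hcontr : ‖S‖ - ε / 2 ≤ M := by linarith
  rw [hε] at hcontr
  linarith

end Symmetric

end Aux

/-- The spatial numerical radius is bounded by the numerical radius. -/
theorem spatialNumRadius_le_numRadius (T Tadj : H →L[ℂ] H) (hT : ∀ x y : H, (inner A (T x) y : A) = inner A x (Tadj y)) :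
    spatialNumRadius A T ≤ numRadius A T := by
  have hN0 : 0 ≤ numRadius A T := by
    apply Real.sSup_nonneg
    rintro r ⟨x, hx, rfl⟩
    positivity
  rw [spatialNumRadius]
  refine Real.sSup_le ?_ hN0
  rintro r ⟨x, ρ, hρ, hx1, rfl⟩
  have hbdd : BddAbove {r : ℝ | ∃ x : H, ‖x‖ = 1 ∧ r = ‖(inner A (T x) x : A)‖} := by
    refine ⟨‖T‖, ?_⟩
    rintro r ⟨u, hu, rfl⟩
    calc ‖(inner A (T u) u : A)‖ ≤ ‖T u‖ * ‖u‖ := RightCStarModule.norm_inner_le H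
      _ ≤ (‖T‖ * ‖u‖) * ‖u‖ := mul_le_mul_of_nonneg_right (T.le_opNorm u) (norm_nonneg u)
      _ = ‖T‖ := by rw [hu]; ring
  have hmem : ∀ u : H, ‖u‖ = 1 → ‖(inner A (T u) u : A)‖ ≤ numRadius A T := by
    intro u hu
    rw [numRadius]
    exact le_csSup hbdd ⟨u, hu, rfl⟩
  set m : ℂ := ρ (inner A x (T x) : A) with hm
  rcases eq_or_ne m 0 with hm0 | hm0
  · rw [hm0]
    simpa using hN0
  have habs : ‖m‖ ≠ 0 := by
    simpa using hm0
  set c : ℂ := starRingEnd ℂ m / ((‖m‖ : ℝ) : ℂ) with hc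
  have habs' : ((‖m‖ : ℝ) : ℂ) ≠ 0 := by exact_mod_cast habs
  have hcm : c * m = ((‖m‖ : ℝ) : ℂ) := by
    rw [hc, div_mul_eq_mul_div, mul_comm, Complex.mul_conj, Complex.normSq_eq_norm_sq]
    push_cast
    rw [pow_two, mul_div_assoc, div_self habs', mul_one]
  have hcabs : ‖c‖ = 1 := by
    rw [hc, norm_div]
    simp only [Complex.norm_conj, Complex.norm_real, Real.norm_eq_abs,
      abs_of_nonneg (norm_nonneg m)]
    rw [div_self habs]
  obtain ⟨S, hSdef⟩ : ∃ S : H →L[ℂ] H, S = c • T + (starRingEnd ℂ c) • Tadj := ⟨_, rfl⟩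
  have hadj' : ∀ y z : H, (inner A (Tadj y) z : A) = inner A y (T z) := by
    intro y z
    calc (inner A (Tadj y) z : A) = star (inner A z (Tadj y) : A) :=
          (RightCStarModule.star_inner _ _).symm
      _ = star (inner A (T z) y : A) := by rw [hT]
      _ = (inner A y (T z) : A) := RightCStarModule.star_inner _ _
  have hSapp : ∀ y : H, S y = c • T y + (starRingEnd ℂ c) • Tadj y := by
    intro y
    rw [hSdef]
    rfl
  have hSsym : ∀ y z : H, (inner A (S y) z : A) = inner A y (S z) := by
    intro y z
    rw [hSapp y, hSapp z]
    simp only [RightCStarModule.inner_add_left, RightCStarModule.inner_add_right,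
      RightCStarModule.inner_smul_left_complex, RightCStarModule.inner_smul_right_complex]
    rw [hT y z, hadj' y z, Complex.star_def, Complex.conj_conj, add_comm]
  have hTadjx : (inner A x (Tadj x) : A) = star (inner A x (T x) : A) := by
    calc (inner A x (Tadj x) : A) = star (inner A (Tadj x) x : A) :=
          (RightCStarModule.star_inner _ _).symm
      _ = star (inner A x (T x) : A) := by rw [hadj']
  have hval : ρ (inner A x (S x) : A) = ((2 * ‖m‖ : ℝ) : ℂ) := by
    rw [hSapp x]
    simp only [RightCStarModule.inner_add_right, RightCStarModule.inner_smul_right_complex, map_add,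
      map_smul]
    rw [hTadjx, hρ.map_star, ← hm]
    simp only [smul_eq_mul]
    rw [← map_mul, hcm, Complex.conj_ofReal]
    push_cast
    ring
  have hx2 : (ρ (inner A x x : A)).re = 1 := by
    rw [hx1, Complex.one_re]
  have hiter : ∀ n : ℕ,
      (2 * ‖m‖) ^ (2 ^ n) ≤ ‖ρ (inner A x ((S ^ (2 ^ n)) x) : A)‖ := by
    intro n
    induction n with
    | zero =>
      simp only [pow_zero, pow_one]
      rw [hval, Complex.norm_real, Real.norm_eq_abs]
      exact le_abs_self _
    | succ n ih =>
      have hcs := hρ.cauchySchwarz x ((S ^ (2 ^ n)) x)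
      have hshift : (inner A ((S ^ (2 ^ n)) x) ((S ^ (2 ^ n)) x) : A)
          = inner A x ((S ^ (2 ^ (n + 1))) x) := by
        rw [sym_pow S hSsym (2 ^ n) x ((S ^ (2 ^ n)) x),
          ← ContinuousLinearMap.mul_apply (S ^ (2 ^ n)) (S ^ (2 ^ n)), ← pow_add]
        congr 2
        rw [pow_succ, Nat.mul_two]
      calc (2 * ‖m‖) ^ (2 ^ (n + 1))
          = ((2 * ‖m‖) ^ (2 ^ n)) ^ 2 := by
            rw [← pow_mul, pow_succ]
        _ ≤ (‖ρ (inner A x ((S ^ (2 ^ n)) x) : A)‖) ^ 2 := by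
            apply pow_le_pow_left₀ (by positivity) ih
        _ ≤ (ρ (inner A x x : A)).re *
              (ρ (inner A ((S ^ (2 ^ n)) x) ((S ^ (2 ^ n)) x) : A)).re := hcs
        _ = (ρ (inner A x ((S ^ (2 ^ (n + 1))) x) : A)).re := by
            rw [hx2, one_mul, hshift]
        _ ≤ ‖ρ (inner A x ((S ^ (2 ^ (n + 1))) x) : A)‖ := Complex.re_le_norm _
  have hgrow : ∀ n : ℕ, (2 * ‖m‖) ^ (2 ^ n) ≤ ‖x‖ ^ 2 * ‖S‖ ^ (2 ^ n) := by
    intro n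
    refine le_trans (hiter n) ?_
    have hnn : (0:ℝ) ≤ ‖x‖ := norm_nonneg x
    calc ‖ρ (inner A x ((S ^ (2 ^ n)) x) : A)‖
        = ‖ρ (inner A x ((S ^ (2 ^ n)) x) : A)‖ := rfl
      _ ≤ ‖ρ‖ * ‖(inner A x ((S ^ (2 ^ n)) x) : A)‖ := ρ.le_opNorm _
      _ = ‖(inner A x ((S ^ (2 ^ n)) x) : A)‖ := by rw [hρ.1, one_mul]
      _ ≤ ‖x‖ * ‖(S ^ (2 ^ n)) x‖ := RightCStarModule.norm_inner_le H
      _ ≤ ‖x‖ * (‖S ^ (2 ^ n)‖ * ‖x‖) :=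
          mul_le_mul_of_nonneg_left ((S ^ (2 ^ n)).le_opNorm x) hnn
      _ ≤ ‖x‖ * (‖S‖ ^ (2 ^ n) * ‖x‖) := by
          have h1 : ‖S ^ (2 ^ n)‖ ≤ ‖S‖ ^ (2 ^ n) := norm_pow_le' S (by positivity)
          have h2 : ‖S ^ (2 ^ n)‖ * ‖x‖ ≤ ‖S‖ ^ (2 ^ n) * ‖x‖ :=
            mul_le_mul_of_nonneg_right h1 hnn
          exact mul_le_mul_of_nonneg_left h2 hnn
      _ = ‖x‖ ^ 2 * ‖S‖ ^ (2 ^ n) := by ring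
  have hxne : x ≠ 0 := by
    rintro rfl
    rw [RightCStarModule.inner_zero_left, map_zero] at hx1
    exact zero_ne_one hx1
  have hC : 0 < ‖x‖ ^ 2 := by
    have := norm_pos_iff.mpr hxne
    positivity
  have h2m : 2 * ‖m‖ ≤ ‖S‖ :=
    le_of_pow_two_pow_le (norm_nonneg S) hC hgrow
  have hSN : ‖S‖ ≤ 2 * numRadius A T := by
    refine opNorm_le_of_inner_bound S hSsym (by linarith) ?_
    intro u hu
    have h1 : (inner A (S u) u : A)
        = (starRingEnd ℂ c) • (inner A (T u) u : A) + c • (inner A (Tadj u) u : A) := by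
      rw [hSapp u]
      simp only [RightCStarModule.inner_add_left, RightCStarModule.inner_smul_left_complex,
        Complex.star_def, Complex.conj_conj]
    have h2 : (inner A (Tadj u) u : A) = star (inner A (T u) u : A) := by
      rw [hadj' u u, ← RightCStarModule.star_inner]
    rw [h1, h2]
    calc ‖(starRingEnd ℂ c) • (inner A (T u) u : A) + c • star (inner A (T u) u : A)‖
        ≤ ‖(starRingEnd ℂ c) • (inner A (T u) u : A)‖ + ‖c • star (inner A (T u) u : A)‖ :=
          norm_add_le _ _
      _ = ‖(inner A (T u) u : A)‖ + ‖(inner A (T u) u : A)‖ := by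
          rw [norm_smul, norm_smul, norm_star]
          have hcc : ‖starRingEnd ℂ c‖ = 1 := by
            rw [Complex.norm_conj, hcabs]
          rw [hcc, hcabs]
          ring
      _ ≤ numRadius A T + numRadius A T := by
          have := hmem u hu
          linarith
      _ = 2 * numRadius A T := by ring
  linarith
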